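/- In the setting of the Jordan basis U of BA with V = AU and Σ the Jordan form, the functions φ_i^{(j)}(x) = p(x)^T v_i^{(j)} (columns of V) satisfy the generalized eigenfunction relations for the integral operator: T_K φ_i^{(1)} = λ_i φ_i^{(1)} for each Jordan block i, and T_K φ_i^{(j+1)} = λ_i φ_i^{(j+1)} + φ_i^{(j)} for j = 1, ..., ℓ_i - 1. -/

import Mathlib

/-!
On the span of `p`, the operator `T_K` acts by a matrix: for `f = c ⬝ᵥ p` one has
`T_K f = (A *ᵥ (B *ᵥ c)) ⬝ᵥ p`, because `T_K f (x) = ∑ i j, A i j p_i(x) ⟨q_j, f⟩` and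
`⟨q_j, f⟩ = (B *ᵥ c) j`. Taking `c = A *ᵥ u` turns `A B A u` into `A ((B A) u)`, so each
Jordan chain relation for `B A` transfers, after applying `A` and expanding against `p`,
to the corresponding relation for `T_K`.
-/

open MeasureTheory Matrix

section DegenerateKernel

variable {α ι κ : Type*} [Fintype ι] {p : ι → α → ℂ} {q : κ → α → ℂ} {w : α → ℂ}

theorem mul_combination_mul_eq_sum (c : ι → ℂ) (j : κ) (y : α) :
    q j y * (c ⬝ᵥ fun i => p i y) * w y = ∑ i, c i * (p i y * q j y * w y) := by
  simp only [dotProduct, Finset.sum_mul, Finset.mul_sum]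
  exact Finset.sum_congr rfl fun i _ => by ring

variable [MeasurableSpace α] {μ : Measure α}

theorem integrable_mul_combination_mul
    (hInt : ∀ i j, Integrable (fun y => p i y * q j y * w y) μ) (c : ι → ℂ) (j : κ) :
    Integrable (fun y => q j y * (c ⬝ᵥ fun i => p i y) * w y) μ := by
  simp only [mul_combination_mul_eq_sum]
  exact integrable_finsetSum _ fun i _ => (hInt i j).const_mul (c i)

theorem integral_mul_combination_mul {B : Matrix κ ι ℂ}
    (hInt : ∀ i j, Integrable (fun y => p i y * q j y * w y) μ)
    (hB : ∀ i j, B j i = ∫ y, p i y * q j y * w y ∂μ) (c : ι → ℂ) (j : κ) :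
    ∫ y, q j y * (c ⬝ᵥ fun i => p i y) * w y ∂μ = (B *ᵥ c) j := by
  simp only [mul_combination_mul_eq_sum]
  rw [integral_finsetSum _ fun i _ => (hInt i j).const_mul (c i), mulVec, dotProduct]
  simp only [integral_const_mul, hB, mul_comm]

theorem integral_degenerateKernel_mul [Fintype κ] (A : Matrix ι κ ℂ) {f : α → ℂ}
    (hf : ∀ j, Integrable (fun y => q j y * f y * w y) μ) (x : α) :
    ∫ y, (∑ i, ∑ j, A i j * p i x * q j y) * f y * w y ∂μ
      = (A *ᵥ fun j => ∫ y, q j y * f y * w y ∂μ) ⬝ᵥ fun i => p i x := by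
  have hterm : ∀ i j, Integrable (fun y => A i j * p i x * q j y * f y * w y) μ :=
    fun i j => by simpa only [mul_assoc] using (hf j).const_mul (A i j * p i x)
  simp only [Finset.sum_mul]
  rw [integral_finsetSum _ fun i _ => integrable_finsetSum _ fun j _ => hterm i j]
  refine Finset.sum_congr rfl fun i _ => ?_
  rw [integral_finsetSum _ fun j _ => hterm i j, mulVec, dotProduct, Finset.sum_mul]
  refine Finset.sum_congr rfl fun j _ => ?_
  simp only [mul_assoc, integral_const_mul]
  ring

theorem integral_degenerateKernel_mul_combination [Fintype κ] {A : Matrix ι κ ℂ}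
    {B : Matrix κ ι ℂ} (hInt : ∀ i j, Integrable (fun y => p i y * q j y * w y) μ)
    (hB : ∀ i j, B j i = ∫ y, p i y * q j y * w y ∂μ) (c : ι → ℂ) (x : α) :
    ∫ y, (∑ i, ∑ j, A i j * p i x * q j y) * (c ⬝ᵥ fun i => p i y) * w y ∂μ
      = (A *ᵥ (B *ᵥ c)) ⬝ᵥ fun i => p i x := by
  rw [integral_degenerateKernel_mul A (integrable_mul_combination_mul hInt c)]
  simp only [integral_mul_combination_mul hInt hB]

end DegenerateKernel

theorem stmt_5_general (N M r : ℕ) (ℓ : Fin r → ℕ) (lam : Fin r → ℂ)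
    (a b : ℝ) (w : ℝ → ℂ)
    (p : Fin N → ℝ → ℂ) (q : Fin M → ℝ → ℂ)
    (A : Matrix (Fin N) (Fin M) ℂ) (B : Matrix (Fin M) (Fin N) ℂ)
    (hInt : ∀ i j, IntegrableOn (fun x => p i x * q j x * w x) (Set.Icc a b))
    (hB : ∀ i j, B j i = ∫ x in Set.Icc a b, p i x * q j x * w x)
    (K : ℝ → ℝ → ℂ) (hK : ∀ x y, K x y = ∑ i, ∑ j, A i j * p i x * q j y)
    (u : Fin r → ℕ → Fin M → ℂ)
    (hu0 : ∀ i, (B * A).mulVec (u i 0) = lam i • u i 0)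
    (hchain : ∀ i j, j + 1 < ℓ i →
      (B * A).mulVec (u i (j + 1)) = lam i • u i (j + 1) + u i j)
    (φ : Fin r → ℕ → ℝ → ℂ)
    (hφ : ∀ i j x, φ i j x = ∑ n, A.mulVec (u i j) n * p n x) :
    (∀ i x, (∫ y in Set.Icc a b, K x y * φ i 0 y * w y) = lam i * φ i 0 x) ∧
      (∀ i j, j + 1 < ℓ i → ∀ x,
        (∫ y in Set.Icc a b, K x y * φ i (j + 1) y * w y)
          = lam i * φ i (j + 1) x + φ i j x) := by
  have hφ' : ∀ i j, φ i j = fun x => (A *ᵥ u i j) ⬝ᵥ fun n => p n x :=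
    fun i j => funext (hφ i j)
  have hT : ∀ i j x, ∫ y in Set.Icc a b, K x y * φ i j y * w y
      = (A *ᵥ ((B * A) *ᵥ u i j)) ⬝ᵥ fun n => p n x := fun i j x => by
    simp only [hK, hφ']
    rw [integral_degenerateKernel_mul_combination hInt hB, ← mulVec_mulVec]
  refine ⟨fun i x => ?_, fun i j hj x => ?_⟩
  · rw [hT, hu0, mulVec_smul, smul_dotProduct, smul_eq_mul, hφ']
  · rw [hT, hchain i j hj, mulVec_add, mulVec_smul, add_dotProduct, smul_dotProduct,
      smul_eq_mul, hφ', hφ']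

theorem stmt_5 (N M r : ℕ) (ℓ : Fin r → ℕ) (lam : Fin r → ℂ)
    (a b : ℝ) (w : ℝ → ℂ)
    (p : Fin N → ℝ → ℂ) (q : Fin M → ℝ → ℂ)
    (hp : LinearIndependent ℂ p)
    (A : Matrix (Fin N) (Fin M) ℂ) (B : Matrix (Fin M) (Fin N) ℂ)
    (hInt : ∀ i j, IntegrableOn (fun x => p i x * q j x * w x) (Set.Icc a b))
    (hB : ∀ i j, B j i = ∫ x in Set.Icc a b, p i x * q j x * w x)
    (K : ℝ → ℝ → ℂ) (hK : ∀ x y, K x y = ∑ i, ∑ j, A i j * p i x * q j y)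
    (u : Fin r → ℕ → Fin M → ℂ)
    (hu0 : ∀ i, (B * A).mulVec (u i 0) = lam i • u i 0)
    (hne : ∀ i, u i 0 ≠ 0)
    (hchain : ∀ i j, j + 1 < ℓ i →
      (B * A).mulVec (u i (j + 1)) = lam i • u i (j + 1) + u i j)
    (φ : Fin r → ℕ → ℝ → ℂ)
    (hφ : ∀ i j x, φ i j x = ∑ n, A.mulVec (u i j) n * p n x) :
    (∀ i x, (∫ y in Set.Icc a b, K x y * φ i 0 y * w y) = lam i * φ i 0 x) ∧
      (∀ i j, j + 1 < ℓ i → ∀ x,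
        (∫ y in Set.Icc a b, K x y * φ i (j + 1) y * w y)
          = lam i * φ i (j + 1) x + φ i j x) :=
  stmt_5_general N M r ℓ lam a b w p q A B hInt hB K hK u hu0 hchain φ hφ
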